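/- arXiv:1201.1548 — 7 statements merged into one kernel-verified Lean document; each statement's English description precedes it below -/
import Mathlib

section
/- Let p ∈ ℂ[X] be a polynomial, let m ∈ ℂ, let r > 0 be a real number, and let K ≥ √2 be a real constant. If the test T^{p'}_K(m,r) holds for the derivative p' of p, i.e. |p'(m)| − K·Σ_{k≥1} (|p'^{(k)}(m)|/k!)·r^k > 0, then the closed disc {z ∈ ℂ : |z − m| ≤ r} contains at most one root of p, and any root of p in this disc is a simple root. -/
open Polynomial

/-- The test `T^p_K(m,r)`: `|p(m)| − K·Σ_{k=1}^{deg p} (|p^{(k)}(m)|/k!)·r^k > 0`. -/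
def testT (p : Polynomial ℂ) (m : ℂ) (r K : ℝ) : Prop :=
  0 < ‖p.eval m‖ -
      K * ∑ k ∈ Finset.Icc 1 p.natDegree,
        (‖(Polynomial.derivative^[k] p).eval m‖ / (Nat.factorial k)) * r ^ k

/-!
With `q = p'` and `S = Σ_{k≥1} |q^{(k)}(m)|/k! · r^k`, Taylor expansion at `m` gives
`|q(z) - q(m)| ≤ S` on the disc, while the test with `K ≥ 1` gives `S < |q(m)|`.
So `q` has no zero in the disc, which makes every root there simple; and the derivative
of `z ↦ p(z) - q(m) z` is bounded by `S` on the disc, so by the mean value inequality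
`|p(z₂) - p(z₁) - q(m)(z₂ - z₁)| ≤ S |z₂ - z₁|`, which forces `p` to be injective
there.
-/

section Taylor

variable {𝕜 : Type*} [RCLike 𝕜]

noncomputable def taylorTailMajorant (q : 𝕜[X]) (m : 𝕜) (r : ℝ) : ℝ :=
  ∑ k ∈ Finset.Icc 1 q.natDegree, ‖(derivative^[k] q).eval m‖ / k.factorial * r ^ k

theorem norm_taylor_coeff (p : 𝕜[X]) (m : 𝕜) (k : ℕ) :
    ‖(taylor m p).coeff k‖ = ‖(derivative^[k] p).eval m‖ / k.factorial := by
  have h : (derivative^[k] p).eval m = k.factorial * (taylor m p).coeff k := by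
    rw [taylor_coeff, ← factorial_smul_hasseDeriv]
    simp [nsmul_eq_mul]
  rw [h, norm_mul, RCLike.norm_natCast, mul_div_cancel_left₀]
  exact_mod_cast k.factorial_ne_zero

theorem norm_eval_sub_eval_le_taylorTailMajorant (q : 𝕜[X]) {m z : 𝕜} {r : ℝ}
    (hz : ‖z - m‖ ≤ r) : ‖q.eval z - q.eval m‖ ≤ taylorTailMajorant q m r := by
  have hexpand : q.eval z - q.eval m
      = ∑ k ∈ Finset.Icc 1 q.natDegree, (taylor m q).coeff k * (z - m) ^ k := by
    rw [← taylor_eval_sub m q z, eval_eq_sum_range, natDegree_taylor, Finset.range_eq_Ico,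
      Finset.sum_eq_sum_Ico_succ_bot (Nat.succ_pos _), taylor_coeff_zero, pow_zero, mul_one,
      add_sub_cancel_left, zero_add, Nat.succ_eq_add_one, Finset.Ico_add_one_right_eq_Icc]
  rw [hexpand]
  refine (norm_sum_le _ _).trans (Finset.sum_le_sum fun k _ => ?_)
  rw [norm_mul, norm_pow, norm_taylor_coeff]
  gcongr

end Taylor

theorem taylorTailMajorant_lt_of_testT {q : ℂ[X]} {m : ℂ} {r K : ℝ} (hK : 1 ≤ K)
    (hT : testT q m r K) : taylorTailMajorant q m r < ‖q.eval m‖ := by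
  have hKS : K * taylorTailMajorant q m r < ‖q.eval m‖ := sub_pos.mp hT
  rcases le_or_gt 0 (taylorTailMajorant q m r) with hS | hS
  · exact (le_mul_of_one_le_left hS hK).trans_lt hKS
  · exact hS.trans_le (norm_nonneg _)

/-- `f - (· • c)` is `C`-Lipschitz on `s` with `C < ‖c‖`. -/
theorem Convex.injOn_of_norm_deriv_sub_le {𝕜 E : Type*} [RCLike 𝕜] [NormedAddCommGroup E]
    [NormedSpace 𝕜 E] {f : 𝕜 → E} {s : Set 𝕜} {c : E} {C : ℝ} (hs : Convex ℝ s)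
    (hf : ∀ x ∈ s, DifferentiableAt 𝕜 f x) (bound : ∀ x ∈ s, ‖deriv f x - c‖ ≤ C)
    (hC : C < ‖c‖) : Set.InjOn f s := by
  intro x hx y hy hfxy
  have hg : ∀ z ∈ s, HasDerivAt (fun w => f w - w • c) (deriv f z - c) z := fun z hz => by
    simpa only [one_smul] using
      (hf z hz).hasDerivAt.fun_sub ((hasDerivAt_id' (x := z)).smul_const c)
  have hlip : ‖(f y - y • c) - (f x - x • c)‖ ≤ C * ‖y - x‖ :=
    hs.norm_image_sub_le_of_norm_hasDerivWithin_le (fun z hz => (hg z hz).hasDerivWithinAt)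
      bound hx hy
  rw [hfxy, sub_sub_sub_cancel_left, ← sub_smul, norm_smul, norm_sub_rev x y] at hlip
  by_contra hne
  have hpos : 0 < ‖y - x‖ := norm_pos_iff.mpr (sub_ne_zero.mpr (Ne.symm hne))
  nlinarith

theorem Polynomial.rootMultiplicity_eq_one_of_not_isRoot_derivative {R : Type*} [CommRing R]
    {p : R[X]} {t : R} (hp : p.IsRoot t) (hp' : ¬ (derivative p).IsRoot t) :
    p.rootMultiplicity t = 1 := by
  have hp0 : p ≠ 0 := by
    rintro rfl
    exact hp' (by simp)
  have hpos : 0 < p.rootMultiplicity t := (rootMultiplicity_pos hp0).mpr hp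
  have hle : ¬ 1 < p.rootMultiplicity t := fun h =>
    hp' ((one_lt_rootMultiplicity_iff_isRoot hp0).mp h).2
  omega

theorem at_most_one_root_in_closed_disc_of_testT_derivative_general (p : Polynomial ℂ) (m : ℂ)
    (r : ℝ) (K : ℝ) (hK : Real.sqrt 2 ≤ K)
    (hT : testT (Polynomial.derivative p) m r K) :
    (∀ z₁ z₂ : ℂ, ‖z₁ - m‖ ≤ r → ‖z₂ - m‖ ≤ r →
      p.eval z₁ = 0 → p.eval z₂ = 0 → z₁ = z₂) ∧
    (∀ z : ℂ, ‖z - m‖ ≤ r → p.eval z = 0 →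
      Polynomial.rootMultiplicity z p = 1) := by
  set q := derivative p
  have hlt := taylorTailMajorant_lt_of_testT (Real.one_lt_sqrt_two.le.trans hK) hT
  have hq_near : ∀ z ∈ Metric.closedBall m r,
      ‖q.eval z - q.eval m‖ ≤ taylorTailMajorant q m r :=
    fun z hz => norm_eval_sub_eval_le_taylorTailMajorant q (mem_closedBall_iff_norm.mp hz)
  refine ⟨fun z₁ z₂ h₁ h₂ e₁ e₂ => ?_, fun z hz hz0 => ?_⟩
  · have hinj : Set.InjOn (fun z => p.eval z) (Metric.closedBall m r) :=
      (convex_closedBall m r).injOn_of_norm_deriv_sub_le (fun _ _ => p.differentiableAt)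
        (fun z hz => by simpa only [Polynomial.deriv] using hq_near z hz) hlt
    exact hinj (mem_closedBall_iff_norm.mpr h₁) (mem_closedBall_iff_norm.mpr h₂)
      (e₁.trans e₂.symm)
  · refine rootMultiplicity_eq_one_of_not_isRoot_derivative hz0 fun hq0 => ?_
    have h := hq_near z (mem_closedBall_iff_norm.mpr hz)
    rw [hq0.eq_zero, zero_sub, norm_neg] at h
    exact h.not_gt hlt

theorem at_most_one_root_in_closed_disc_of_testT_derivative (p : Polynomial ℂ) (m : ℂ)
    (r : ℝ) (hr : 0 < r) (K : ℝ) (hK : Real.sqrt 2 ≤ K)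
    (hT : testT (Polynomial.derivative p) m r K) :
    (∀ z₁ z₂ : ℂ, ‖z₁ - m‖ ≤ r → ‖z₂ - m‖ ≤ r →
      p.eval z₁ = 0 → p.eval z₂ = 0 → z₁ = z₂) ∧
    (∀ z : ℂ, ‖z - m‖ ≤ r → p.eval z = 0 →
      Polynomial.rootMultiplicity z p = 1) :=
  at_most_one_root_in_closed_disc_of_testT_derivative_general p m r K hK hT
end

section
/- Let p ∈ ℂ[X] be a polynomial and let K ⊆ ℂ be a convex set. Suppose there exists a nonzero w ∈ ℂ such that for every z ∈ K the derivative p'(z) is nonzero and the angle between p'(z) and w is strictly less than π/4. Then p has at most one root in K. -/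
/-!
Since the angle is below `π / 2`, every value `p' z / w` with `z ∈ K` lies in the open right
half-plane. This makes `p / w` injective on the convex set `K` (Noshiro–Warschawski): for
`a ≠ b` in `K`, the real part of `p (a + t (b - a)) / (w (b - a))` has derivative
`Re (p' / w) > 0` in `t ∈ [0, 1]`, so by Rolle it takes different values at `t = 0` and `t = 1`.
-/

open Polynomial Set

theorem HasDerivAt.re_div_comp_line {f : ℂ → ℂ} {f' a v : ℂ} {t : ℝ} (hv : v ≠ 0)
    (hf : HasDerivAt f f' (a + t * v)) :
    HasDerivAt (fun s : ℝ => (f (a + s * v) / v).re) f'.re t := by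
  have hline : HasDerivAt (fun ζ : ℂ => a + ζ * v) v t := by
    simpa using ((hasDerivAt_id (t : ℂ)).mul_const v).const_add a
  have := (hf.comp (t : ℂ) hline).div_const v
  rw [mul_div_cancel_right₀ _ hv] at this
  exact this.real_of_complex

theorem Convex.injOn_of_hasDerivAt_of_re_pos {K : Set ℂ} {f f' : ℂ → ℂ} (hK : Convex ℝ K)
    (hf : ∀ z ∈ K, HasDerivAt f (f' z) z) (hf' : ∀ z ∈ K, 0 < (f' z).re) : K.InjOn f := by
  intro a ha b hb hfab
  by_contra hab
  have hmem : ∀ t ∈ Icc (0 : ℝ) 1, a + t * (b - a) ∈ K := fun t ht => by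
    simpa [Complex.real_smul] using hK.add_smul_sub_mem ha hb ht
  have hderiv : ∀ t ∈ Icc (0 : ℝ) 1, HasDerivAt (fun s : ℝ => (f (a + s * (b - a)) / (b - a)).re)
      (f' (a + t * (b - a))).re t := fun t ht =>
    (hf _ (hmem t ht)).re_div_comp_line (sub_ne_zero.mpr (Ne.symm hab))
  obtain ⟨c, hc, hc0⟩ := exists_hasDerivAt_eq_zero zero_lt_one
    (fun t ht => (hderiv t ht).continuousAt.continuousWithinAt) (by simp [hfab])
    (fun t ht => hderiv t (Ioo_subset_Icc_self ht))
  exact (hf' _ (hmem c (Ioo_subset_Icc_self hc))).ne' hc0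

theorem at_most_one_root_in_convex_set_of_derivative_angle_lt_pi_div_four
    (p : Polynomial ℂ) (K : Set ℂ) (hK : Convex ℝ K)
    (hw : ∃ w : ℂ, w ≠ 0 ∧ ∀ z ∈ K, (Polynomial.derivative p).eval z ≠ 0 ∧
      |Complex.arg ((Polynomial.derivative p).eval z / w)| < Real.pi / 4) :
    ∀ z₁ ∈ K, ∀ z₂ ∈ K, p.eval z₁ = 0 → p.eval z₂ = 0 → z₁ = z₂ := by
  obtain ⟨w, hw0, hangle⟩ := hw
  have hre : ∀ z ∈ K, 0 < ((derivative p).eval z / w).re := fun z hz => by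
    obtain ⟨hz0, harg⟩ := hangle z hz
    refine (Complex.abs_arg_lt_pi_div_two_iff.mp (by linarith [Real.pi_pos])).resolve_right ?_
    exact div_ne_zero hz0 hw0
  have hinj : K.InjOn fun z => p.eval z / w :=
    hK.injOn_of_hasDerivAt_of_re_pos (fun z _ => (p.hasDerivAt z).div_const w) hre
  intro z₁ hz₁ z₂ hz₂ h₁ h₂
  exact hinj hz₁ hz₂ (by simp [h₁, h₂])
end

section
/- Let R ∈ ℂ[X] be a nonzero polynomial, let m ∈ ℂ and r > 0, and let α be a root of R of multiplicity i₀ with |α − m| ≤ r. Assume that every root β of R with β ≠ α satisfies |β − m| > 8r. Then for every z ∈ ℂ with |z − m| = 2r one has |R(z)| > 2^{−i₀ − deg R}·|R(m − 2r)|. -/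
/-!
Write `w = m - 2r` and `R = (X - α)^i₀ Q`, and compare `|R(w)|` with `|R(z)|` root by root.
For the root `α` we have `|w - α| ≤ 3r < 4r ≤ 4|z - α|`. Every root `β` of `Q` lies at distance
more than `6r` from the circle `|x - m| = 2r`, whose diameter is `4r`, so `|w - β| ≤ 2|z - β|`.
Hence `|R(w)| < 4^i₀ 2^(deg R - i₀) |R(z)| = 2^(i₀ + deg R) |R(z)|`.
-/

open Polynomial

theorem Polynomial.Splits.norm_eval_le_pow_mul_norm_eval {K : Type*} [NormedField K]
    {p : K[X]} (hp : p.Splits) {C : ℝ} {w z : K}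
    (h : ∀ a ∈ p.roots, ‖w - a‖ ≤ C * ‖z - a‖) :
    ‖p.eval w‖ ≤ C ^ p.natDegree * ‖p.eval z‖ := by
  have hnorm (x : K) : ‖p.eval x‖ = ‖p.leadingCoeff‖ * (p.roots.map (‖x - ·‖)).prod := by
    rw [hp.eval_eq_prod_roots, norm_mul, ← normHom_apply (_ : Multiset _).prod, map_multiset_prod,
      Multiset.map_map]
    rfl
  rw [hnorm, hnorm, hp.natDegree_eq_card_roots, mul_left_comm, ← Multiset.prod_replicate,
    ← Multiset.map_const', ← Multiset.prod_map_mul]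
  gcongr
  exact Multiset.prod_map_le_prod_map₀ _ _ (fun _ _ => norm_nonneg _) h

theorem Polynomial.exists_eq_pow_rootMultiplicity_mul_of_ne_zero {R : Type*} [CommRing R]
    [IsDomain R] {p : R[X]} (hp : p ≠ 0) (a : R) :
    ∃ q : R[X], p = (X - C a) ^ p.rootMultiplicity a * q ∧
      p.natDegree = p.rootMultiplicity a + q.natDegree ∧
      ∀ b, q.IsRoot b → p.IsRoot b ∧ b ≠ a := by
  obtain ⟨q, hpq, hqa⟩ := exists_eq_pow_rootMultiplicity_mul_and_not_dvd p hp a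
  have hq : q ≠ 0 := by rintro rfl; exact hp (by simpa using hpq)
  refine ⟨q, hpq, ?_, fun b hb => ⟨?_, ?_⟩⟩
  · rw [hpq, natDegree_mul (pow_ne_zero _ (X_sub_C_ne_zero a)) hq, natDegree_pow,
      natDegree_X_sub_C, mul_one, ← hpq]
  · rw [hpq, IsRoot, eval_mul, hb.eq_zero, mul_zero]
  · rintro rfl
    exact hqa (dvd_iff_isRoot.mpr hb)

section CircleGeometry

variable {E : Type*} [SeminormedAddCommGroup E] {m w z a : E} {r : ℝ}

theorem norm_sub_le_two_mul_norm_sub_of_far (hw : ‖w - m‖ ≤ 2 * r) (hz : ‖z - m‖ ≤ 2 * r)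
    (ha : 6 * r ≤ ‖a - m‖) : ‖w - a‖ ≤ 2 * ‖z - a‖ := by
  have := norm_sub_le_norm_sub_add_norm_sub w m a
  have := norm_sub_le_norm_sub_add_norm_sub a z m
  rw [norm_sub_rev m a, norm_sub_rev a z] at *
  linarith

theorem norm_sub_lt_four_mul_norm_sub_of_near (hr : 0 < r) (hw : ‖w - m‖ ≤ 2 * r)
    (hz : 2 * r ≤ ‖z - m‖) (ha : ‖a - m‖ ≤ r) : ‖w - a‖ < 4 * ‖z - a‖ := by
  have := norm_sub_le_norm_sub_add_norm_sub w m a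
  have := norm_sub_le_norm_sub_add_norm_sub z a m
  rw [norm_sub_rev m a] at *
  linarith

end CircleGeometry

theorem lower_bound_on_circle_of_isolated_root (R : Polynomial ℂ) (hR : R ≠ 0)
    (m : ℂ) (r : ℝ) (hr : 0 < r) (α : ℂ) (i₀ : ℕ)
    (hroot : R.eval α = 0) (hmult : Polynomial.rootMultiplicity α R = i₀)
    (hnear : ‖α - m‖ ≤ r)
    (hfar : ∀ β : ℂ, R.eval β = 0 → β ≠ α → 8 * r < ‖β - m‖) :
    ∀ z : ℂ, ‖z - m‖ = 2 * r →
      (2 : ℝ) ^ (-(i₀ : ℤ) - (R.natDegree : ℤ)) * ‖R.eval (m - (2 * r : ℝ))‖ <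
        ‖R.eval z‖ := by
  intro z hz
  set w : ℂ := m - (2 * r : ℝ)
  have hw : ‖w - m‖ = 2 * r := by simp [w, abs_of_pos hr]
  have hi₀ : i₀ ≠ 0 := hmult ▸ ((rootMultiplicity_pos hR).mpr hroot).ne'
  obtain ⟨Q, hRQ, hdeg, hQ_roots⟩ := exists_eq_pow_rootMultiplicity_mul_of_ne_zero hR α
  rw [hmult] at hRQ hdeg
  have hfar_Q {b : ℂ} (hb : Q.IsRoot b) : 8 * r < ‖b - m‖ :=
    hfar b (hQ_roots b hb).1 (hQ_roots b hb).2
  have hQz : Q.eval z ≠ 0 := fun h => by linarith [hfar_Q h]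
  have hQw : ‖Q.eval w‖ ≤ 2 ^ Q.natDegree * ‖Q.eval z‖ :=
    (IsAlgClosed.splits Q).norm_eval_le_pow_mul_norm_eval fun b hb =>
      norm_sub_le_two_mul_norm_sub_of_far hw.le hz.le
        (by linarith [hfar_Q (isRoot_of_mem_roots hb)])
  have hnorm_R (x : ℂ) : ‖R.eval x‖ = ‖x - α‖ ^ i₀ * ‖Q.eval x‖ := by
    rw [hRQ, eval_mul, norm_mul, eval_pow, norm_pow, eval_sub, eval_X, eval_C]
  have hmain : ‖R.eval w‖ < 2 ^ (i₀ + R.natDegree) * ‖R.eval z‖ := calc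
    ‖R.eval w‖ = ‖w - α‖ ^ i₀ * ‖Q.eval w‖ := hnorm_R w
    _ < (4 * ‖z - α‖) ^ i₀ * (2 ^ Q.natDegree * ‖Q.eval z‖) :=
      mul_lt_mul_of_lt_of_le_of_nonneg_of_pos
        (pow_lt_pow_left₀ (norm_sub_lt_four_mul_norm_sub_of_near hr hw.le hz.ge hnear)
          (norm_nonneg _) hi₀) hQw (by positivity) (by positivity)
    _ = 2 ^ (i₀ + R.natDegree) * ‖R.eval z‖ := by
      rw [hnorm_R, hdeg, pow_add, pow_add, mul_pow, show (4 : ℝ) = 2 ^ 2 by norm_num, ← pow_mul]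
      ring
  rwa [show -(i₀ : ℤ) - R.natDegree = -((i₀ + R.natDegree : ℕ) : ℤ) by push_cast; ring,
    zpow_neg, zpow_natCast, inv_mul_lt_iff₀ (by positivity)]
end

section
/- Let f, g ∈ ℝ[x,y] be bivariate polynomials with real coefficients, of positive degree in both x and y, having no common nonconstant factor, and set R^{(y)} := res(f,g;y) ∈ ℝ[x] and R^{(x)} := res(f,g;x) ∈ ℝ[y]. Let Δ_α ⊆ ℂ be a closed disc containing exactly one complex root of R^{(y)}, namely a real number α, and let Δ_β ⊆ ℂ be a closed disc containing exactly one complex root of R^{(x)}, namely a real number β. Then every (z₁, z₂) ∈ Δ_α × Δ_β with f(z₁,z₂) = g(z₁,z₂) = 0 satisfies (z₁,z₂) = (α,β); in particular, the polydisc Δ_α × Δ_β contains at most one common solution of f = g = 0, and if it contains one, that solution is real. -/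
open Polynomial

/-- The Sylvester matrix of two univariate polynomials `f` and `g`. -/
noncomputable def sylvester {R : Type*} [CommRing R] (f g : Polynomial R) :
    Matrix (Fin (f.natDegree + g.natDegree)) (Fin (f.natDegree + g.natDegree)) R :=
  Matrix.of fun i j =>
    if (i : ℕ) < g.natDegree then
      (if (i : ℕ) ≤ (j : ℕ) ∧ (j : ℕ) ≤ (i : ℕ) + f.natDegree
        then f.coeff ((i : ℕ) + f.natDegree - (j : ℕ)) else 0)
    else
      (if (i : ℕ) - g.natDegree ≤ (j : ℕ) ∧ (j : ℕ) ≤ ((i : ℕ) - g.natDegree) + g.natDegree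
        then g.coeff (((i : ℕ) - g.natDegree) + g.natDegree - (j : ℕ)) else 0)

/-- The resultant of two univariate polynomials; for `f g : (R[x])[y]` this is
`res(f,g;y) ∈ R[x]`. -/
noncomputable def resultant {R : Type*} [CommRing R] (f g : Polynomial R) : R :=
  (_root_.sylvester f g).det

/-- Exchange the two variables of a bivariate polynomial: a polynomial in `y`
with coefficients in `R[x]` becomes the same polynomial regarded in `x` with
coefficients in `R[y]`. -/
noncomputable def swapXY {R : Type*} [CommRing R] (f : Polynomial (Polynomial R)) :
    Polynomial (Polynomial R) :=
  Polynomial.eval₂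
    (Polynomial.eval₂RingHom (Polynomial.C.comp Polynomial.C) Polynomial.X)
    (Polynomial.C Polynomial.X) f

/-- Evaluation of a real bivariate polynomial `f ∈ (ℝ[x])[y]` at a complex
point `(x, y)`. -/
noncomputable def evalBivR (x y : ℂ) (f : Polynomial (Polynomial ℝ)) : ℂ :=
  Polynomial.eval₂
    ((Polynomial.evalRingHom x).comp (Polynomial.mapRingHom (algebraMap ℝ ℂ))) y f

/-! The resultant `res(f,g;y)` is an `ℝ[x][y]`-combination `p f + q g` (Mathlib's
`exists_mul_add_mul_eq_C_resultant`; the Sylvester matrix used here is the transpose of Mathlib's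
with both indices reversed), so it vanishes at the `x`-coordinate of every common zero of `f`
and `g`. A common zero in the polydisc therefore has `z₁ = α` by the uniqueness of the root of
`R^{(y)}` in `Δ_α`; exchanging the variables gives `z₂ = β`. -/

open Matrix

theorem sylvester_eq_transpose_submatrix_rev {R : Type*} [CommRing R] (f g : R[X]) :
    _root_.sylvester f g =
      (Polynomial.sylvester f g f.natDegree g.natDegree)ᵀ.submatrix Fin.rev Fin.rev := by
  ext i j
  have hj := j.isLt
  by_cases hi : (i : ℕ) < g.natDegree
  · have hrev : i.rev = Fin.natAdd f.natDegree ⟨g.natDegree - 1 - i, by omega⟩ :=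
      Fin.ext (by simp only [Fin.val_rev, Fin.natAdd_mk]; omega)
    simp only [_root_.sylvester, Polynomial.sylvester, of_apply, submatrix_apply, transpose_apply,
      hrev, Fin.addCases_right, Fin.val_rev, Set.mem_Icc, if_pos hi]
    congr 1
    · exact propext (by omega)
    · congr 1; omega
  · have hrev : i.rev = Fin.castAdd g.natDegree ⟨f.natDegree + g.natDegree - 1 - i, by omega⟩ :=
      Fin.ext (by simp only [Fin.val_rev, Fin.castAdd_mk]; omega)
    simp only [_root_.sylvester, Polynomial.sylvester, of_apply, submatrix_apply, transpose_apply,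
      hrev, Fin.addCases_left, Fin.val_rev, Set.mem_Icc, if_neg hi]
    congr 1
    · exact propext (by omega)
    · congr 1; omega

theorem resultant_eq_polynomial_resultant {R : Type*} [CommRing R] (f g : R[X]) :
    _root_.resultant f g = f.resultant g := by
  rw [_root_.resultant, sylvester_eq_transpose_submatrix_rev]
  exact (det_submatrix_equiv_self Fin.revPerm _).trans (det_transpose _)

theorem Polynomial.resultant_eq_zero_of_eval₂_eq_zero {R S : Type*} [CommRing R] [CommRing S]
    (ψ : R →+* S) (y : S) {f g : R[X]} (hdeg : f.natDegree ≠ 0 ∨ g.natDegree ≠ 0)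
    (hf : f.eval₂ ψ y = 0) (hg : g.eval₂ ψ y = 0) : ψ (f.resultant g) = 0 := by
  obtain ⟨p, q, -, -, hpq⟩ := exists_mul_add_mul_eq_C_resultant f g le_rfl le_rfl hdeg
  simpa [hf, hg] using (congrArg (eval₂ ψ y) hpq).symm

theorem aeval_resultant_eq_zero_of_evalBivR_eq_zero {f g : Polynomial (Polynomial ℝ)}
    (hdeg : f.natDegree ≠ 0 ∨ g.natDegree ≠ 0) {z₁ z₂ : ℂ}
    (hf : evalBivR z₁ z₂ f = 0) (hg : evalBivR z₁ z₂ g = 0) :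
    aeval z₁ (_root_.resultant f g) = 0 := by
  rw [resultant_eq_polynomial_resultant, aeval_def, eval₂_eq_eval_map]
  exact resultant_eq_zero_of_eval₂_eq_zero _ z₂ hdeg hf hg

theorem swapXY_eq_swap {R : Type*} [CommRing R] (p : Polynomial (Polynomial R)) :
    swapXY p = Bivariate.swap p := by
  have hom : eval₂RingHom (eval₂RingHom ((C : R[X] →+* R[X][X]).comp C) X) (C X) =
      (Bivariate.swap : R[X][X] ≃ₐ[R] R[X][X]).toRingHom := by
    refine ringHom_ext' (ringHom_ext (fun r => ?_) ?_) ?_ <;>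
      simp [Bivariate.swap_C_C, Bivariate.swap_X, Bivariate.swap_Y]
  exact congr($hom p)

theorem evalBivR_eq_aevalAeval (x y : ℂ) (p : Polynomial (Polynomial ℝ)) :
    evalBivR x y p = aevalAeval x y p := by
  have hom : eval₂RingHom ((evalRingHom x).comp (mapRingHom (algebraMap ℝ ℂ))) y =
      (aevalAeval x y : Polynomial (Polynomial ℝ) →ₐ[ℝ] ℂ).toRingHom := by
    refine ringHom_ext' (ringHom_ext (fun r => ?_) ?_) ?_ <;> simp
  exact congr($hom p)

theorem evalBivR_swapXY (z₁ z₂ : ℂ) (p : Polynomial (Polynomial ℝ)) :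
    evalBivR z₁ z₂ (swapXY p) = evalBivR z₂ z₁ p := by
  rw [evalBivR_eq_aevalAeval, evalBivR_eq_aevalAeval, swapXY_eq_swap, Bivariate.aevalAeval_swap]

theorem natDegree_swapXY_ne_zero {R : Type*} [CommRing R] {p : Polynomial (Polynomial R)}
    (hp : ∃ k, 0 < (p.coeff k).natDegree) : (swapXY p).natDegree ≠ 0 := by
  obtain ⟨k, hk⟩ := hp
  intro h
  rw [swapXY_eq_swap] at h
  have hp : p = ((Bivariate.swap p).coeff 0).map C := by
    rw [← Bivariate.swap_C, ← eq_C_of_natDegree_eq_zero h, Bivariate.swap_swap_apply]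
  rw [hp, coeff_map, natDegree_C] at hk
  exact hk.false

theorem polydisc_contains_at_most_one_solution_general (f g : Polynomial (Polynomial ℝ))
    (hfy : 0 < f.natDegree)
    (hfx : ∃ k, 0 < (f.coeff k).natDegree)
    (cα cβ : ℂ) (ρα ρβ : ℝ) (α β : ℝ)
    (hαuniq : ∀ z : ℂ, ‖z - cα‖ ≤ ρα →
      Polynomial.aeval z (_root_.resultant f g) = 0 → z = (α : ℂ))
    (hβuniq : ∀ z : ℂ, ‖z - cβ‖ ≤ ρβ →
      Polynomial.aeval z (_root_.resultant (swapXY f) (swapXY g)) = 0 → z = (β : ℂ)) :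
    ∀ z₁ z₂ : ℂ, ‖z₁ - cα‖ ≤ ρα → ‖z₂ - cβ‖ ≤ ρβ →
      evalBivR z₁ z₂ f = 0 → evalBivR z₁ z₂ g = 0 → z₁ = (α : ℂ) ∧ z₂ = (β : ℂ) := by
  intro z₁ z₂ h₁ h₂ hf hg
  have hf' : evalBivR z₂ z₁ (swapXY f) = 0 := by rwa [evalBivR_swapXY]
  have hg' : evalBivR z₂ z₁ (swapXY g) = 0 := by rwa [evalBivR_swapXY]
  exact ⟨hαuniq z₁ h₁ (aeval_resultant_eq_zero_of_evalBivR_eq_zero (.inl hfy.ne') hf hg),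
    hβuniq z₂ h₂ <|
      aeval_resultant_eq_zero_of_evalBivR_eq_zero (.inl (natDegree_swapXY_ne_zero hfx)) hf' hg'⟩

theorem polydisc_contains_at_most_one_solution (f g : Polynomial (Polynomial ℝ))
    (hfy : 0 < f.natDegree) (hgy : 0 < g.natDegree)
    (hfx : ∃ k, 0 < (f.coeff k).natDegree) (hgx : ∃ k, 0 < (g.coeff k).natDegree)
    (hcop : ∀ d : Polynomial (Polynomial ℝ), d ∣ f → d ∣ g → IsUnit d)
    (cα cβ : ℂ) (ρα ρβ : ℝ) (hρα : 0 ≤ ρα) (hρβ : 0 ≤ ρβ) (α β : ℝ)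
    (hαmem : ‖(α : ℂ) - cα‖ ≤ ρα)
    (hαroot : Polynomial.aeval (α : ℂ) (_root_.resultant f g) = 0)
    (hαuniq : ∀ z : ℂ, ‖z - cα‖ ≤ ρα →
      Polynomial.aeval z (_root_.resultant f g) = 0 → z = (α : ℂ))
    (hβmem : ‖(β : ℂ) - cβ‖ ≤ ρβ)
    (hβroot : Polynomial.aeval (β : ℂ) (_root_.resultant (swapXY f) (swapXY g)) = 0)
    (hβuniq : ∀ z : ℂ, ‖z - cβ‖ ≤ ρβ →
      Polynomial.aeval z (_root_.resultant (swapXY f) (swapXY g)) = 0 → z = (β : ℂ)) :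
    ∀ z₁ z₂ : ℂ, ‖z₁ - cα‖ ≤ ρα → ‖z₂ - cβ‖ ≤ ρβ →
      evalBivR z₁ z₂ f = 0 → evalBivR z₁ z₂ g = 0 → z₁ = (α : ℂ) ∧ z₂ = (β : ℂ) :=
  polydisc_contains_at_most_one_solution_general f g hfy hfx cα cβ ρα ρβ α β hαuniq hβuniq
end

section
/- Let f ∈ ℂ[x,y] be a nonzero square-free bivariate polynomial. Consider F(s,y) := f(s·y, y) as an element of the polynomial ring ℂ[s,y], and let m be the largest integer such that y^m divides F in ℂ[s,y]. Then F / y^m is a square-free element of ℂ[s,y]. -/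
/-! The substitution `x ↦ s·y` is an injective ring map `ℂ[x][y] → ℂ[s][y]` which becomes
surjective once `y` is inverted: `y ^ k * g` lies in its image for every `g`. So a square factor
`p²` of `G` with `p` prime and not associated to `y` pulls back to a square factor of
`y ^ N * f`; its part prime to `y` divides `f`, hence is a unit, forcing `p ∣ y`. -/

open Polynomial

/-- For a bivariate polynomial `f ∈ (ℂ[x])[y]`, the substitution `x ↦ s·y`,
yielding `F(s,y) = f(s·y, y)` as an element of `(ℂ[s])[y]`. -/
noncomputable def substSY (f : Polynomial (Polynomial ℂ)) : Polynomial (Polynomial ℂ) :=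
  Polynomial.eval₂
    (Polynomial.eval₂RingHom (Polynomial.C.comp Polynomial.C)
      (Polynomial.C Polynomial.X * Polynomial.X))
    Polynomial.X f

noncomputable def substMulX (R : Type*) [CommRing R] : R[X][X] →+* R[X][X] :=
  eval₂RingHom (eval₂RingHom (C.comp C) (C X * X)) X

section substMulX

variable {R : Type*} [CommRing R]

@[simp]
lemma substMulX_X : substMulX R X = X := eval₂_X _ _

@[simp]
lemma substMulX_C_C (c : R) : substMulX R (C (C c)) = C (C c) := by
  simp [substMulX, coe_eval₂RingHom]

@[simp]
lemma substMulX_C_X : substMulX R (C X) = C X * X := by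
  simp [substMulX, coe_eval₂RingHom]

lemma exists_substMulX_eq_X_pow_mul_C (a : R[X]) :
    ∃ (k : ℕ) (h : R[X][X]), substMulX R h = X ^ k * C a := by
  induction a using Polynomial.induction_on' with
  | add p q hp hq =>
    obtain ⟨k₁, h₁, e₁⟩ := hp
    obtain ⟨k₂, h₂, e₂⟩ := hq
    refine ⟨k₁ + k₂, X ^ k₂ * h₁ + X ^ k₁ * h₂, ?_⟩
    simp only [map_add, map_mul, map_pow, substMulX_X, e₁, e₂]
    ring
  | monomial i c =>
    refine ⟨i, C (C c) * C X ^ i, ?_⟩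
    simp only [map_mul, map_pow, substMulX_C_C, substMulX_C_X, ← C_mul_X_pow_eq_monomial]
    ring

lemma exists_substMulX_eq_X_pow_mul (g : R[X][X]) :
    ∃ (k : ℕ) (h : R[X][X]), substMulX R h = X ^ k * g := by
  induction g using Polynomial.induction_on' with
  | add p q hp hq =>
    obtain ⟨k₁, h₁, e₁⟩ := hp
    obtain ⟨k₂, h₂, e₂⟩ := hq
    refine ⟨k₁ + k₂, X ^ k₂ * h₁ + X ^ k₁ * h₂, ?_⟩
    simp only [map_add, map_mul, map_pow, substMulX_X, e₁, e₂]
    ring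
  | monomial n a =>
    obtain ⟨k, h, e⟩ := exists_substMulX_eq_X_pow_mul_C a
    refine ⟨k, h * X ^ n, ?_⟩
    rw [map_mul, map_pow, substMulX_X, e, ← C_mul_X_pow_eq_monomial]
    ring

/-- Over the fraction field, `s ↦ s / y` undoes the substitution. -/
lemma substMulX_injective [IsDomain R] : Function.Injective (substMulX R) := by
  let ι : R[X][X] →+* FractionRing R[X][X] := algebraMap _ _
  have hι : Function.Injective ι := IsFractionRing.injective _ _
  have hX : ι X ≠ 0 := (map_ne_zero_iff ι hι).2 X_ne_zero
  let ω : R[X][X] →+* FractionRing R[X][X] :=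
    eval₂RingHom (eval₂RingHom (ι.comp (C.comp C)) (ι (C X) * (ι X)⁻¹)) (ι X)
  have hω : ω.comp (substMulX R) = ι := by
    refine ringHom_ext' (ringHom_ext' ?_ ?_) ?_
    · ext c
      simp [ω, coe_eval₂RingHom]
    · simp [ω, coe_eval₂RingHom, mul_assoc, inv_mul_cancel₀ hX]
    · simp [ω, coe_eval₂RingHom]
  refine .of_comp (f := ω) ?_
  rwa [← RingHom.coe_comp, hω]

end substMulX

lemma substSY_eq_substMulX (f : ℂ[X][X]) : substSY f = substMulX ℂ f := rfl

lemma Squarefree.prime_dvd_map_of_mul_self_dvd_map {A B : Type*} [CommRing A] [IsDomain A]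
    [UniqueFactorizationMonoid A] [CommRing B] [IsDomain B] {φ : A →+* B}
    (hφ : Function.Injective φ) {x : A} (hx : Prime x)
    (hsurj : ∀ b : B, ∃ (k : ℕ) (a : A), φ a = φ x ^ k * b)
    {f : A} (hf : Squarefree f) {p : B} (hp : Prime p) (hpf : p * p ∣ φ f) : p ∣ φ x := by
  obtain ⟨t, ht⟩ := hpf
  obtain ⟨k, a, ha⟩ := hsurj p
  obtain ⟨j, c, hc⟩ := hsurj t
  have hφx : φ x ≠ 0 := (map_ne_zero_iff φ hφ).2 hx.ne_zero
  have ha0 : a ≠ 0 := by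
    rintro rfl
    exact mul_ne_zero (pow_ne_zero k hφx) hp.ne_zero (by simpa using ha.symm)
  have hpull : a * a * c = x ^ (k + k + j) * f := hφ <| by
    simp only [map_mul, map_pow, ha, hc, ht]
    ring
  obtain ⟨r, u, hxu, rfl⟩ := WfDvdMonoid.max_power_factor ha0 hx.irreducible
  have hu : IsUnit u := by
    refine hf u (IsRelPrime.dvd_of_dvd_mul_left ?_ (y := x ^ (k + k + j)) ?_)
    · have hux : IsRelPrime u x := (hx.irreducible.isRelPrime_iff_not_dvd.2 hxu).symm
      exact (hux.mul_left hux).pow_right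
    · rw [← hpull]
      exact ⟨x ^ r * x ^ r * c, by ring⟩
  have hpx : p ∣ φ x ^ r * φ u := ⟨φ x ^ k, by rw [← map_pow, ← map_mul, ha]; ring⟩
  exact hp.dvd_of_dvd_pow ((hu.map φ).dvd_mul_right.mp hpx)

theorem squarefree_of_substSY_div_y_pow_general (f : Polynomial (Polynomial ℂ))
    (hsf : Squarefree f) (m : ℕ) (G : Polynomial (Polynomial ℂ))
    (hfactor : substSY f = Polynomial.X ^ m * G) (hmax : ¬ Polynomial.X ∣ G) :
    Squarefree G := by
  have hG : G ≠ 0 := by rintro rfl; exact hmax (dvd_zero _)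
  refine (squarefree_iff_irreducible_sq_not_dvd_of_ne_zero hG).2 fun p hp hpG => hmax ?_
  have hpF : p * p ∣ substMulX ℂ f := by
    rw [← substSY_eq_substMulX, hfactor]
    exact hpG.mul_left _
  have hsurj (g : ℂ[X][X]) : ∃ (k : ℕ) (h : ℂ[X][X]), substMulX ℂ h = substMulX ℂ X ^ k * g := by
    simpa only [substMulX_X] using exists_substMulX_eq_X_pow_mul g
  have hpX : p ∣ substMulX ℂ X :=
    hsf.prime_dvd_map_of_mul_self_dvd_map substMulX_injective prime_X hsurj hp.prime hpF
  rw [substMulX_X] at hpX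
  exact (hp.dvd_symm irreducible_X hpX).trans ((dvd_mul_right p p).trans hpG)

theorem squarefree_of_substSY_div_y_pow (f : Polynomial (Polynomial ℂ))
    (hf : f ≠ 0) (hsf : Squarefree f) (m : ℕ) (G : Polynomial (Polynomial ℂ))
    (hfactor : substSY f = Polynomial.X ^ m * G) (hmax : ¬ Polynomial.X ∣ G) :
    Squarefree G :=
  squarefree_of_substSY_div_y_pow_general f hsf m G hfactor hmax
end

section
/- Let g ∈ ℂ[z] be a polynomial of degree n ≥ 1 with leading coefficient g_n, and let z_1, …, z_n ∈ ℂ be pairwise distinct points. For each i set ω_i := g(z_i) / ∏_{j ≠ i} (z_i − z_j) and r_i := (n/2)·(ω_i / g_n), and let D_i be the closed disc with center z_i − r_i and radius |r_i|. Then every root of g belongs to the union D_1 ∪ … ∪ D_n. -/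
/-!
Write `g = g_n ∏ (X - z_j) + L`, where `L` is the Lagrange interpolant of `g` at the nodes `z_j`;
in barycentric form this gives, at a root `w` of `g` that is not a node,
`∑ ω_i / (w - z_i) = -g_n`, i.e. `∑ r_i / (w - z_i) = -n/2`. Hence some `r_i / (w - z_i)` has real
part at most `-1/2`, and `Re (v / u) ≤ -1/2` is exactly the condition `‖u + v‖ ≤ ‖v‖`, here with
`u = w - z_i`, `v = r_i`.
-/

open Polynomial Lagrange Finset

theorem Complex.norm_one_add_le_norm_of_re_le {t : ℂ} (ht : t.re ≤ -(1 / 2)) :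
    ‖1 + t‖ ≤ ‖t‖ := by
  rw [Complex.norm_def, Complex.norm_def]
  apply Real.sqrt_le_sqrt
  simp only [Complex.normSq_apply, Complex.add_re, Complex.add_im, Complex.one_re,
    Complex.one_im]
  nlinarith

theorem Complex.norm_add_le_norm_of_re_div_le {u v : ℂ} (h : (v / u).re ≤ -(1 / 2)) :
    ‖u + v‖ ≤ ‖v‖ := by
  have hu : u ≠ 0 := by rintro rfl; norm_num at h
  calc ‖u + v‖ = ‖u‖ * ‖1 + v / u‖ := by rw [← norm_mul, mul_add, mul_one, mul_div_cancel₀ _ hu]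
    _ ≤ ‖u‖ * ‖v / u‖ := by gcongr; exact norm_one_add_le_norm_of_re_le h
    _ = ‖v‖ := by rw [← norm_mul, mul_div_cancel₀ _ hu]

namespace Lagrange

variable {F ι : Type*} [Field F] [DecidableEq ι] {s : Finset ι} {v : ι → F} {g : F[X]}

theorem eq_C_leadingCoeff_mul_nodal_add_interpolate (hvs : Set.InjOn v s)
    (hg : g.natDegree = #s) :
    g = C g.leadingCoeff * nodal s v + interpolate s v (fun i => g.eval (v i)) := by
  rw [← sub_eq_iff_eq_add']
  refine eq_interpolate_of_eval_eq _ hvs ?_ fun i hi => by simp [eval_nodal_at_node hi]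
  rcases eq_or_ne g 0 with rfl | hg0
  · simp
  have hlc : g.leadingCoeff ≠ 0 := leadingCoeff_ne_zero.2 hg0
  calc (g - C g.leadingCoeff * nodal s v).degree < g.degree := by
        refine degree_sub_lt_left ?_ hg0 ?_
        · rw [degree_C_mul hlc, degree_nodal, degree_eq_natDegree hg0, hg]
        · rw [leadingCoeff_mul, leadingCoeff_C, nodal_monic.leadingCoeff, mul_one]
    _ = #s := by rw [degree_eq_natDegree hg0, hg]

theorem sum_nodalWeight_mul_inv_sub_mul_eval_eq_neg_leadingCoeff (hvs : Set.InjOn v s)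
    (hg : g.natDegree = #s) {x : F} (hx : ∀ i ∈ s, x ≠ v i) (hroot : g.eval x = 0) :
    ∑ i ∈ s, nodalWeight s v i * (x - v i)⁻¹ * g.eval (v i) = -g.leadingCoeff := by
  have h := congrArg (eval x) (eq_C_leadingCoeff_mul_nodal_add_interpolate hvs hg)
  rw [eval_add, eval_mul, eval_C, eval_interpolate_not_at_node _ hx, hroot, mul_comm,
    ← mul_add, eq_comm, mul_eq_zero] at h
  exact eq_neg_of_add_eq_zero_right (h.resolve_left (eval_nodal_not_at_node hx))

end Lagrange

theorem neumaier_inclusion (g : Polynomial ℂ) (n : ℕ) (hn : g.natDegree = n) (hn1 : 1 ≤ n)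
    (z : Fin n → ℂ) (hz : Function.Injective z)
    (ω r : Fin n → ℂ)
    (hω : ∀ i, ω i = g.eval (z i) / ∏ j ∈ Finset.univ.erase i, (z i - z j))
    (hr : ∀ i, r i = ((n : ℂ) / 2) * (ω i / g.leadingCoeff)) :
    ∀ w : ℂ, g.eval w = 0 →
      ∃ i : Fin n, ‖w - (z i - r i)‖ ≤ ‖r i‖ := by
  intro w hw
  by_cases hnode : ∃ i, w = z i
  · obtain ⟨i, rfl⟩ := hnode
    exact ⟨i, by simp [hr i, hω i, hw]⟩
  push Not at hnode
  have hlc : g.leadingCoeff ≠ 0 := leadingCoeff_ne_zero.2 (ne_zero_of_natDegree_gt (hn ▸ hn1))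
  have hsum : ∑ i, r i / (w - z i) = ∑ _i : Fin n, (-(1 / 2) : ℂ) := by
    have hbary := sum_nodalWeight_mul_inv_sub_mul_eval_eq_neg_leadingCoeff (s := univ) hz.injOn
      (by simpa using hn) (fun i _ => hnode i) hw
    calc ∑ i, r i / (w - z i)
        = (n / 2) / g.leadingCoeff *
            ∑ i, nodalWeight univ z i * (w - z i)⁻¹ * g.eval (z i) := by
          rw [mul_sum]
          refine sum_congr rfl fun i _ => ?_
          rw [hr i, hω i, nodalWeight, prod_inv_distrib]
          ring
      _ = _ := by
          rw [hbary, sum_const, card_univ, Fintype.card_fin, nsmul_eq_mul]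
          field_simp
  obtain ⟨i, -, hi⟩ := exists_le_of_sum_le (s := univ) ⟨⟨0, hn1⟩, mem_univ _⟩
    (f := fun i => (r i / (w - z i)).re) (g := fun _ => -(1 / 2))
    (by rw [← Complex.re_sum, hsum, Complex.re_sum]; simp)
  refine ⟨i, ?_⟩
  rw [show w - (z i - r i) = (w - z i) + r i by ring]
  exact Complex.norm_add_le_norm_of_re_div_le hi
end

section
/- Let g ∈ ℂ[z] be a polynomial of degree n ≥ 1 with leading coefficient g_n, and let z_1, …, z_n ∈ ℂ be pairwise distinct points. For each i set ω_i := g(z_i) / ∏_{j ≠ i} (z_i − z_j) and r_i := (n/2)·(ω_i / g_n), and let D_i be the closed disc with center z_i − r_i and radius |r_i|. Let C be a connected component of the union D_1 ∪ … ∪ D_n. Then the number of roots of g lying in C, counted with multiplicity, equals the number of indices i with D_i ⊆ C. -/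
/-!
Let `a` be the leading coefficient of `g` and `L` the Lagrange interpolant of `g` at the nodes
`z i`, so that `g = a ∏ (X - z i) + L`, and deform along `P t = a ∏ (X - z i) + t L`,
`0 ≤ t ≤ 1`. Away from the nodes `P t (w) = a ∏ (w - z i) (1 + t (2 / n) ∑ r i / (w - z i))`,
and `w ∉ D i` means `Re (r i / (w - z i)) > -1/2`; so off `U` the bracket has positive real
part and no `P t` has a root there. As `C` and `U \ C` are both closed (finite unions of discs),
the roots, which move continuously with `t`, cannot pass between them: `g = P 1` has as many
roots in `C` as `P 0`, whose roots are the nodes, and `z i ∈ C` exactly when `D i ⊆ C`.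
-/

open Polynomial Filter Topology Set
open scoped Finset

section Topology
variable {X : Type*} [TopologicalSpace X]

theorem isClosed_connectedComponentIn {F : Set X} (hF : IsClosed F) (x : X) :
    IsClosed (connectedComponentIn F x) := by
  by_cases hx : x ∈ F
  · refine closure_subset_iff_isClosed.1 ?_
    exact isPreconnected_connectedComponentIn.closure.subset_connectedComponentIn
      (subset_closure (mem_connectedComponentIn hx))
      (closure_minimal (connectedComponentIn_subset F x) hF)
  · rw [connectedComponentIn_eq_empty hx]
    exact isClosed_empty

theorem subset_connectedComponentIn_iff_mem {s F : Set X} {x y : X} (hs : IsPreconnected s)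
    (hsF : s ⊆ F) (hy : y ∈ s) :
    s ⊆ connectedComponentIn F x ↔ y ∈ connectedComponentIn F x :=
  ⟨fun h => h hy, fun hyx =>
    connectedComponentIn_eq hyx ▸ hs.subset_connectedComponentIn hy hsF⟩

theorem isClosed_iUnion_diff_connectedComponentIn {ι : Type*} [Finite ι] {D : ι → Set X}
    (hclosed : ∀ i, IsClosed (D i)) (hconn : ∀ i, IsPreconnected (D i)) (x : X) :
    IsClosed ((⋃ i, D i) \ connectedComponentIn (⋃ i, D i) x) := by
  set K := connectedComponentIn (⋃ i, D i) x
  have hdiff : (⋃ i, D i) \ K = ⋃ i ∈ {i | ¬D i ⊆ K}, D i := by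
    ext y
    simp only [Set.mem_sdiff, mem_iUnion, mem_ofPred_eq, exists_prop]
    constructor
    · rintro ⟨⟨i, hyi⟩, hyK⟩
      exact ⟨i, fun hiK => hyK (hiK hyi), hyi⟩
    · rintro ⟨i, hiK, hyi⟩
      exact ⟨⟨i, hyi⟩, fun hyK =>
        hiK ((subset_connectedComponentIn_iff_mem (hconn i) (subset_iUnion D i) hyi).2 hyK)⟩
  rw [hdiff]
  exact (toFinite _).isClosed_biUnion fun i _ => hclosed i

theorem Filter.Tendsto.eventually_mem_iff {α : Type*} {l : Filter α} {f : α → X} {x : X}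
    {U S : Set X} (hf : Tendsto f l (𝓝 x)) (hfU : ∀ᶠ k in l, f k ∈ U) (hS : IsClosed S)
    (hUS : IsClosed (U \ S)) : ∀ᶠ k in l, f k ∈ S ↔ x ∈ S := by
  by_cases hx : x ∈ S
  · filter_upwards [hfU, hf.eventually (hUS.isOpen_compl.eventually_mem fun h => h.2 hx)]
      with k hkU hk
    exact iff_of_true (not_not.1 fun hkS => hk ⟨hkU, hkS⟩) hx
  · filter_upwards [hf.eventually (hS.isOpen_compl.eventually_mem hx)] with k hk
    exact iff_of_false hk hx

end Topology

section Roots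
variable {K : Type*} [Field K]

theorem exists_eq_C_mul_prod_X_sub_C [IsAlgClosed K] {p : K[X]} {n : ℕ} (hp : p.natDegree = n) :
    ∃ w : Fin n → K, p = C p.leadingCoeff * ∏ i, (X - C (w i)) := by
  obtain ⟨l, hl⟩ := Quot.exists_rep p.roots
  have hlen : l.length = n := by
    rw [← hp, ← IsAlgClosed.card_roots_eq_natDegree, ← hl]
    rfl
  subst hlen
  have hroots : Finset.univ.val.map (fun i : Fin l.length => l[i]) = p.roots := by
    rw [Fin.univ_val_map, ← hl]
    simp only [Fin.getElem_fin, List.ofFn_getElem]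
    rfl
  refine ⟨fun i => l[i], ?_⟩
  conv_lhs => rw [← C_leadingCoeff_mul_prod_multiset_X_sub_C (p := p)
    IsAlgClosed.card_roots_eq_natDegree, ← hroots, Multiset.map_map]
  rfl

theorem roots_C_mul_prod_X_sub_C {ι : Type*} [Fintype ι] {a : K} (ha : a ≠ 0) (w : ι → K) :
    (C a * ∏ i, (X - C (w i))).roots = Finset.univ.val.map w := by
  rw [roots_C_mul _ ha, Finset.prod_eq_multiset_prod,
    show (fun i => X - C (w i)) = (fun a => X - C a) ∘ w from rfl, ← Multiset.map_map,
    roots_multiset_prod_X_sub_C]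

theorem card_filter_roots_C_mul_prod_X_sub_C {ι : Type*} [Fintype ι] {a : K} (ha : a ≠ 0)
    (w : ι → K) (S : Set K) [DecidablePred (· ∈ S)] :
    ((C a * ∏ i, (X - C (w i))).roots.filter (· ∈ S)).card = #{i | w i ∈ S} := by
  rw [roots_C_mul_prod_X_sub_C ha, Multiset.filter_map, Multiset.card_map]
  rfl

end Roots

section Continuity
variable {K : Type*} [Field K] [TopologicalSpace K] [IsTopologicalRing K] [T2Space K]

theorem eq_C_mul_prod_X_sub_C_of_tendsto [Infinite K] {α ι : Type*} [Fintype ι] {l : Filter α}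
    [l.NeBot] {a : K} {w : α → ι → K} {v : ι → K} {p : α → K[X]} {q : K[X]}
    (hp : ∀ k, p k = C a * ∏ i, (X - C (w k i))) (hw : Tendsto w l (𝓝 v))
    (hq : ∀ x, Tendsto (fun k => (p k).eval x) l (𝓝 (q.eval x))) :
    q = C a * ∏ i, (X - C (v i)) := by
  refine Polynomial.funext fun x => tendsto_nhds_unique (hq x) ?_
  have hcont : Continuous fun u : ι → K => a * ∏ i, (x - u i) := by fun_prop
  simpa [hp, eval_prod, Function.comp_def] using (hcont.tendsto v).comp hw

theorem isLocallyConstant_card_filter_roots [IsAlgClosed K] [FirstCountableTopology K]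
    {T : Type*} [TopologicalSpace T] [FirstCountableTopology T] {P : T → K[X]} {n : ℕ} {a : K}
    (ha : a ≠ 0) (hdeg : ∀ t, (P t).natDegree = n) (hlead : ∀ t, (P t).leadingCoeff = a)
    (hcont : ∀ x, Continuous fun t => (P t).eval x) {U S : Set K} [DecidablePred (· ∈ S)]
    (hU : IsCompact U) (hS : IsClosed S) (hUS : IsClosed (U \ S))
    (hroots : ∀ t, ∀ w ∈ (P t).roots, w ∈ U) :
    IsLocallyConstant fun t => ((P t).roots.filter (· ∈ S)).card := by
  rw [IsLocallyConstant.iff_eventually_eq]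
  intro t
  by_contra hne
  -- Along parameters `u k → t` where the count differs, a subsequence of root tuples converges in
  -- the compact `Uⁿ` to a root tuple of `P t`, and membership in `S` eventually stabilises.
  obtain ⟨u, hut, hu⟩ := exists_seq_forall_of_frequently (not_eventually.1 hne)
  choose w hw using fun k => exists_eq_C_mul_prod_X_sub_C (hdeg (u k))
  simp only [hlead] at hw
  have hwU : ∀ k i, w k i ∈ U := fun k i => hroots (u k) _ <| by
    rw [hw k, roots_C_mul_prod_X_sub_C ha]
    exact Multiset.mem_map_of_mem _ (Finset.mem_univ_val i)
  obtain ⟨v, -, φ, hφ, hwv⟩ :=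
    (isCompact_univ_pi fun _ => hU).tendsto_subseq fun k => mem_univ_pi.2 (hwU k)
  have hPt : P t = C a * ∏ i, (X - C (v i)) :=
    eq_C_mul_prod_X_sub_C_of_tendsto (fun k => hw (φ k)) hwv fun x =>
      ((hcont x).tendsto t).comp (hut.comp hφ.tendsto_atTop)
  have hmem : ∀ᶠ k in atTop, ∀ i, w (φ k) i ∈ S ↔ v i ∈ S :=
    eventually_all.2 fun i =>
      (tendsto_pi_nhds.1 hwv i).eventually_mem_iff
        (Eventually.of_forall fun k => hwU (φ k) i) hS hUS
  obtain ⟨k, hk⟩ := hmem.exists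
  apply hu (φ k)
  rw [hw (φ k), hPt, card_filter_roots_C_mul_prod_X_sub_C ha,
    card_filter_roots_C_mul_prod_X_sub_C ha]
  simp only [hk]

end Continuity

section LagrangeHomotopy
open Lagrange
variable {F : Type*} [Field F] {ι : Type*} [Fintype ι] [DecidableEq ι]

noncomputable def lagrangeHomotopy (g : F[X]) (z : ι → F) (t : F) : F[X] :=
  C g.leadingCoeff * nodal Finset.univ z + interpolate Finset.univ z fun i => t * g.eval (z i)

variable {g : F[X]} {z : ι → F}

theorem lagrangeHomotopy_zero :
    lagrangeHomotopy g z 0 = C g.leadingCoeff * ∏ i, (X - C (z i)) := by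
  simp [lagrangeHomotopy, nodal]

theorem degree_interpolate_lt_degree_C_mul_nodal (hz : Function.Injective z) {a : F} (ha : a ≠ 0)
    (r : ι → F) : (interpolate Finset.univ z r).degree < (C a * nodal Finset.univ z).degree := by
  rw [degree_C_mul ha, degree_nodal]
  exact degree_interpolate_lt _ hz.injOn

theorem lagrangeHomotopy_one (hz : Function.Injective z) (hg : g.natDegree = Fintype.card ι) :
    lagrangeHomotopy g z 1 = g := by
  rcases eq_or_ne g 0 with rfl | hg0
  · simp [lagrangeHomotopy]
  have hdeg : (g - C g.leadingCoeff * nodal Finset.univ z).degree < #(Finset.univ : Finset ι) := by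
    have hgdeg : g.degree = #(Finset.univ : Finset ι) := by
      rw [degree_eq_natDegree hg0, hg, Finset.card_univ]
    rw [← hgdeg]
    refine degree_sub_lt_left ?_ hg0 ?_
    · rw [degree_C_mul (leadingCoeff_ne_zero.2 hg0), degree_nodal, hgdeg]
    · rw [leadingCoeff_mul, leadingCoeff_C, nodal_monic.leadingCoeff, mul_one]
  have := eq_interpolate_of_eval_eq (r := fun i => g.eval (z i)) hz.injOn hdeg
    fun i hi => by simp [eval_nodal_at_node hi]
  simp only [lagrangeHomotopy, one_mul, ← this]
  ring

theorem natDegree_lagrangeHomotopy (hz : Function.Injective z) (hg : g ≠ 0) (t : F) :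
    (lagrangeHomotopy g z t).natDegree = Fintype.card ι := by
  have ha := leadingCoeff_ne_zero.2 hg
  rw [lagrangeHomotopy,
    natDegree_add_eq_left_of_degree_lt (degree_interpolate_lt_degree_C_mul_nodal hz ha _),
    natDegree_C_mul ha, natDegree_nodal, Finset.card_univ]

theorem leadingCoeff_lagrangeHomotopy (hz : Function.Injective z) (hg : g ≠ 0) (t : F) :
    (lagrangeHomotopy g z t).leadingCoeff = g.leadingCoeff := by
  rw [lagrangeHomotopy, leadingCoeff_add_of_degree_lt'
    (degree_interpolate_lt_degree_C_mul_nodal hz (leadingCoeff_ne_zero.2 hg) _),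
    leadingCoeff_mul, leadingCoeff_C, nodal_monic.leadingCoeff, mul_one]

theorem eval_lagrangeHomotopy {x : F} (hx : ∀ i, x ≠ z i) (t : F) :
    (lagrangeHomotopy g z t).eval x =
      (nodal Finset.univ z).eval x *
        (g.leadingCoeff +
          t * ∑ i, nodalWeight Finset.univ z i * (x - z i)⁻¹ * g.eval (z i)) := by
  rw [lagrangeHomotopy, eval_add, eval_mul, eval_C,
    eval_interpolate_not_at_node _ fun i _ => hx i]
  have hsum : ∑ i, nodalWeight Finset.univ z i * (x - z i)⁻¹ * (t * g.eval (z i)) =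
      t * ∑ i, nodalWeight Finset.univ z i * (x - z i)⁻¹ * g.eval (z i) := by
    rw [Finset.mul_sum]
    exact Finset.sum_congr rfl fun i _ => by ring
  rw [hsum]
  ring

theorem continuous_eval_lagrangeHomotopy [TopologicalSpace F] [IsTopologicalRing F] (g : F[X])
    (z : ι → F) (x : F) : Continuous fun t => (lagrangeHomotopy g z t).eval x := by
  simp only [lagrangeHomotopy, interpolate_apply, eval_add, eval_mul, eval_C, eval_finsetSum]
  fun_prop

end LagrangeHomotopy

theorem neg_half_lt_re_div_of_notMem_closedBall {c r w : ℂ}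
    (h : w ∉ Metric.closedBall (c - r) ‖r‖) : -1 / 2 < (r / (w - c)).re := by
  rw [Metric.mem_closedBall, dist_eq_norm, not_le, show w - (c - r) = w - c + r by ring] at h
  have hwc : w - c ≠ 0 := fun hwc => by
    rw [hwc, zero_add] at h
    exact lt_irrefl _ h
  have hsq : Complex.normSq r < Complex.normSq (w - c + r) := by
    rw [← Complex.sq_norm, ← Complex.sq_norm]
    exact pow_lt_pow_left₀ h (norm_nonneg _) two_ne_zero
  have hpos : 0 < Complex.normSq (w - c) := Complex.normSq_pos.2 hwc
  rw [Complex.normSq_add, Complex.mul_re, Complex.conj_re, Complex.conj_im] at hsq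
  rw [Complex.div_re, ← add_div, lt_div_iff₀ hpos]
  simp only [Complex.normSq_apply] at hsq hpos ⊢
  nlinarith

theorem one_add_mul_sum_ne_zero {ι : Type*} [Fintype ι] [Nonempty ι] {q : ι → ℂ}
    (hq : ∀ i, -1 / 2 < (q i).re) {t : ℝ} (ht0 : 0 ≤ t) (ht1 : t ≤ 1) :
    1 + t * (2 / Fintype.card ι) * ∑ i, q i ≠ 0 := by
  have hcard : (0 : ℝ) < Fintype.card ι := Nat.cast_pos.2 Fintype.card_pos
  have hsum : -1 < 2 / Fintype.card ι * ∑ i, (q i).re := by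
    have := Finset.sum_lt_sum_of_nonempty Finset.univ_nonempty fun i _ => hq i
    rw [Finset.sum_const, Finset.card_univ, nsmul_eq_mul] at this
    rw [div_mul_eq_mul_div, lt_div_iff₀ hcard]
    linarith
  intro h
  have hre := congrArg Complex.re h
  rw [show (t : ℂ) * (2 / Fintype.card ι) = ((t * (2 / Fintype.card ι) : ℝ) : ℂ) by
      push_cast; ring,
    Complex.add_re, Complex.one_re, Complex.re_ofReal_mul, Complex.re_sum, Complex.zero_re,
    mul_assoc] at hre
  rcases ht0.eq_or_lt with rfl | htpos
  · simp at hre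
  · nlinarith [mul_pos htpos (neg_lt_iff_pos_add.1 hsum)]

section Neumaier
variable {n : ℕ} [NeZero n] {g : ℂ[X]} {z ω r : Fin n → ℂ}

theorem eval_lagrangeHomotopy_ne_zero (hg : g ≠ 0)
    (hω : ∀ i, ω i = g.eval (z i) / ∏ j ∈ Finset.univ.erase i, (z i - z j))
    (hr : ∀ i, r i = ((n : ℂ) / 2) * (ω i / g.leadingCoeff)) {w : ℂ}
    (hw : ∀ i, w ∉ Metric.closedBall (z i - r i) ‖r i‖) {t : ℝ} (ht0 : 0 ≤ t)
    (ht1 : t ≤ 1) :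
    (lagrangeHomotopy g z t).eval w ≠ 0 := by
  have hwz : ∀ i, w ≠ z i := fun i hwi =>
    hw i (hwi ▸ Metric.mem_closedBall.2 (by rw [dist_eq_norm, sub_sub_cancel]))
  have hterm : ∀ i, Lagrange.nodalWeight Finset.univ z i * (w - z i)⁻¹ * g.eval (z i) =
      g.leadingCoeff * (2 / n) * (r i / (w - z i)) := by
    intro i
    have : (n : ℂ) ≠ 0 := Nat.cast_ne_zero.2 (NeZero.ne n)
    rw [hr, hω, Lagrange.nodalWeight, Finset.prod_inv_distrib]
    field_simp [leadingCoeff_ne_zero.2 hg]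
  rw [eval_lagrangeHomotopy hwz]
  refine mul_ne_zero (Lagrange.eval_nodal_not_at_node fun i _ => hwz i) ?_
  simp_rw [hterm, ← Finset.mul_sum]
  have hne := one_add_mul_sum_ne_zero
    (fun i => neg_half_lt_re_div_of_notMem_closedBall (hw i)) ht0 ht1
  rw [Fintype.card_fin] at hne
  convert mul_ne_zero (leadingCoeff_ne_zero.2 hg) hne using 1
  ring

theorem card_filter_roots_eq_card_filter_nodes (hn : g.natDegree = n) (hz : Function.Injective z)
    (hω : ∀ i, ω i = g.eval (z i) / ∏ j ∈ Finset.univ.erase i, (z i - z j))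
    (hr : ∀ i, r i = ((n : ℂ) / 2) * (ω i / g.leadingCoeff)) {U S : Set ℂ}
    [DecidablePred (· ∈ S)] (hU : IsCompact U)
    (hdiscs : ∀ i, Metric.closedBall (z i - r i) ‖r i‖ ⊆ U) (hS : IsClosed S)
    (hUS : IsClosed (U \ S)) :
    (g.roots.filter (· ∈ S)).card = #{i | z i ∈ S} := by
  have hg : g ≠ 0 := ne_zero_of_natDegree_gt (hn ▸ NeZero.pos n)
  set H : Icc (0 : ℝ) 1 → ℂ[X] := fun t => lagrangeHomotopy g z (t : ℂ)
  have hroots : ∀ t, ∀ w ∈ (H t).roots, w ∈ U := fun t w hw => by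
    by_contra hwU
    exact eval_lagrangeHomotopy_ne_zero hg hω hr (fun i hwi => hwU (hdiscs i hwi)) t.2.1 t.2.2
      (isRoot_of_mem_roots hw)
  have hlc := isLocallyConstant_card_filter_roots (P := H) (leadingCoeff_ne_zero.2 hg)
    (fun t => natDegree_lagrangeHomotopy hz hg _) (fun t => leadingCoeff_lagrangeHomotopy hz hg _)
    (fun x => (continuous_eval_lagrangeHomotopy g z x).comp
      (Complex.continuous_ofReal.comp continuous_subtype_val))
    hU hS hUS hroots
  calc (g.roots.filter (· ∈ S)).card = ((H ⟨1, by simp⟩).roots.filter (· ∈ S)).card := by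
        simp [H, lagrangeHomotopy_one hz (hn.trans (Fintype.card_fin n).symm)]
    _ = ((H ⟨0, by simp⟩).roots.filter (· ∈ S)).card := hlc.apply_eq_of_preconnectedSpace _ _
    _ = #{i | z i ∈ S} := by
      simp only [H, Complex.ofReal_zero, lagrangeHomotopy_zero,
        card_filter_roots_C_mul_prod_X_sub_C (leadingCoeff_ne_zero.2 hg)]

end Neumaier

open scoped Classical in
theorem neumaier_component_root_count_general (g : Polynomial ℂ) (n : ℕ)
    (hn : g.natDegree = n)
    (z : Fin n → ℂ) (hz : Function.Injective z)
    (ω r : Fin n → ℂ)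
    (hω : ∀ i, ω i = g.eval (z i) / ∏ j ∈ Finset.univ.erase i, (z i - z j))
    (hr : ∀ i, r i = ((n : ℂ) / 2) * (ω i / g.leadingCoeff))
    (D : Fin n → Set ℂ)
    (hD : ∀ i, D i = {w : ℂ | ‖w - (z i - r i)‖ ≤ ‖r i‖})
    (U : Set ℂ) (hU : U = ⋃ i, D i)
    (x₀ : ℂ) (C : Set ℂ) (hC : C = connectedComponentIn U x₀) :
    (g.roots.filter (fun w => w ∈ C)).card =
      (Finset.univ.filter (fun i : Fin n => D i ⊆ C)).card := by
  obtain rfl | hn0 := n.eq_zero_or_pos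
  · rw [eq_C_of_natDegree_eq_zero hn, roots_C]
    simp
  have : NeZero n := ⟨hn0.ne'⟩
  have hball : ∀ i, D i = Metric.closedBall (z i - r i) ‖r i‖ := fun i => by
    simp [hD, Metric.closedBall, dist_eq_norm]
  have hclosed : ∀ i, IsClosed (D i) := fun i => hball i ▸ Metric.isClosed_closedBall
  have hconn : ∀ i, IsPreconnected (D i) := fun i =>
    hball i ▸ (convex_closedBall _ _).isPreconnected
  have hzD : ∀ i, z i ∈ D i := fun i => by simp [hD]
  subst hU hC
  rw [card_filter_roots_eq_card_filter_nodes hn hz hω hr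
    (isCompact_iUnion fun i => hball i ▸ isCompact_closedBall _ _)
    (fun i => hball i ▸ subset_iUnion D i)
    (isClosed_connectedComponentIn (isClosed_iUnion_of_finite hclosed) x₀)
    (isClosed_iUnion_diff_connectedComponentIn hclosed hconn x₀)]
  congr 1
  ext i
  simp only [Finset.mem_filter, Finset.mem_univ, true_and,
    subset_connectedComponentIn_iff_mem (hconn i) (subset_iUnion D i) (hzD i)]

open scoped Classical in
theorem neumaier_component_root_count (g : Polynomial ℂ) (n : ℕ)
    (hn : g.natDegree = n) (hn1 : 1 ≤ n)
    (z : Fin n → ℂ) (hz : Function.Injective z)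
    (ω r : Fin n → ℂ)
    (hω : ∀ i, ω i = g.eval (z i) / ∏ j ∈ Finset.univ.erase i, (z i - z j))
    (hr : ∀ i, r i = ((n : ℂ) / 2) * (ω i / g.leadingCoeff))
    (D : Fin n → Set ℂ)
    (hD : ∀ i, D i = {w : ℂ | ‖w - (z i - r i)‖ ≤ ‖r i‖})
    (U : Set ℂ) (hU : U = ⋃ i, D i)
    (x₀ : ℂ) (hx₀ : x₀ ∈ U) (C : Set ℂ) (hC : C = connectedComponentIn U x₀) :
    (g.roots.filter (fun w => w ∈ C)).card =
      (Finset.univ.filter (fun i : Fin n => D i ⊆ C)).card :=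
  neumaier_component_root_count_general g n hn z hz ω r hω hr D hD U hU x₀ C hC
end
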